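/- arXiv:math/0205097 — 2 statements merged into one kernel-verified Lean document; each statement's English description precedes it below -/
import Mathlib

section
/- For all real x with 0 < x < 2, the series P_k(x) = x * Σ_{l=1}^∞ l^k (1-x)^{l-1} satisfies the recursion P_0(x) = 1 and P_{k+1}(x) = (1/x) P_k(x) + (x-1) P_k'(x), where P_k' denotes the derivative of P_k. -/
/-!
With `y = 1 - x` we have `P_k(x) = x E_k(y)` for `E_k(y) = ∑ (n+1)^k y^n`. Since
`(n+1) y^n = (1 + y d/dy) y^n`, termwise differentiation gives `E_{k+1} = E_k + y E_k'`, which is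
legitimate for `|y| < 1` because polynomially weighted geometric series converge there.
Substituting `y = 1 - x` yields the recursion, and `E_0(y) = 1 / (1 - y) = 1 / x` gives `P_0 = 1`.
-/

/-- The power series `P_k(x) = x * ∑_{l=1}^∞ l^k (1-x)^{l-1}`. -/
noncomputable def Pk (k : ℕ) (x : ℝ) : ℝ :=
  x * ∑' l : ℕ, ((l : ℝ) + 1) ^ k * (1 - x) ^ l

theorem summable_add_pow_mul_geometric {R : Type*} [NormedCommRing R] [CompleteSpace R]
    (c : R) (k : ℕ) {r : R} (hr : ‖r‖ < 1) :
    Summable fun n : ℕ => ((n : R) + c) ^ k * r ^ n := by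
  have expand : ∀ n : ℕ, ((n : R) + c) ^ k * r ^ n =
      ∑ j ∈ Finset.range (k + 1), (c ^ (k - j) * k.choose j) * ((n : R) ^ j * r ^ n) := by
    intro n
    rw [add_pow, Finset.sum_mul]
    exact Finset.sum_congr rfl fun j _ => by ring
  simp_rw [expand]
  exact summable_sum fun j _ =>
    (summable_pow_mul_geometric_of_norm_lt_one j hr).mul_left _

noncomputable def eulerianSeries (k : ℕ) (y : ℝ) : ℝ :=
  ∑' n : ℕ, ((n : ℝ) + 1) ^ k * y ^ n

theorem summable_add_one_pow_mul_deriv_pow (k : ℕ) {r : ℝ} (hr : |r| < 1) :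
    Summable fun n : ℕ => ((n : ℝ) + 1) ^ k * (n * r ^ (n - 1)) := by
  rw [← summable_nat_add_iff 1]
  refine Summable.of_norm_bounded (summable_add_pow_mul_geometric 2 (k + 1) (r := |r|)
    (by simpa using hr)) fun n => ?_
  simp only [Nat.add_sub_cancel, Nat.cast_add, Nat.cast_one, norm_mul, norm_pow,
    Real.norm_eq_abs, abs_of_nonneg (by positivity : (0 : ℝ) ≤ n + 1),
    abs_of_nonneg (by positivity : (0 : ℝ) ≤ n + 1 + 1)]
  calc ((n : ℝ) + 1 + 1) ^ k * ((n + 1) * |r| ^ n)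
      ≤ ((n : ℝ) + 1 + 1) ^ k * ((n + 2) * |r| ^ n) := by gcongr; linarith
    _ = ((n : ℝ) + 2) ^ (k + 1) * |r| ^ n := by ring

theorem hasDerivAt_eulerianSeries (k : ℕ) {y : ℝ} (hy : |y| < 1) :
    HasDerivAt (eulerianSeries k) (∑' n : ℕ, ((n : ℝ) + 1) ^ k * (n * y ^ (n - 1))) y := by
  obtain ⟨r, hyr, hr1⟩ := exists_between hy
  have hr : |r| < 1 := by rwa [abs_of_nonneg ((abs_nonneg y).trans hyr.le)]
  have hy_mem : y ∈ Metric.ball (0 : ℝ) r := by simpa using hyr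
  refine hasDerivAt_tsum_of_isPreconnected
    (g := fun (n : ℕ) (t : ℝ) => ((n : ℝ) + 1) ^ k * t ^ n)
    (g' := fun (n : ℕ) (t : ℝ) => ((n : ℝ) + 1) ^ k * (n * t ^ (n - 1)))
    (summable_add_one_pow_mul_deriv_pow k hr) Metric.isOpen_ball (convex_ball 0 r).isPreconnected
    (fun n t _ => ?_) (fun n t ht => ?_) hy_mem
    (summable_add_pow_mul_geometric 1 k (by simpa using hy)) hy_mem
  · exact (hasDerivAt_pow n t).const_mul _
  · have ht : |t| ≤ r := by simpa using (Metric.mem_ball.mp ht).le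
    simp only [norm_mul, norm_pow, Real.norm_eq_abs, Nat.abs_cast,
      abs_of_nonneg (by positivity : (0 : ℝ) ≤ n + 1)]
    gcongr

theorem eulerianSeries_succ (k : ℕ) {y : ℝ} (hy : |y| < 1) :
    eulerianSeries (k + 1) y = eulerianSeries k y + y * deriv (eulerianSeries k) y := by
  have hsum (m : ℕ) := summable_add_pow_mul_geometric 1 m (r := y) (by simpa using hy)
  rw [(hasDerivAt_eulerianSeries k hy).deriv, ← tsum_mul_left, ← sub_eq_iff_eq_add',
    eulerianSeries, eulerianSeries, ← (hsum (k + 1)).tsum_sub (hsum k)]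
  refine tsum_congr fun n => ?_
  rcases n with _ | n
  · simp
  · rw [Nat.add_sub_cancel, pow_succ y n]
    push_cast
    ring

theorem hasDerivAt_Pk (k : ℕ) {x : ℝ} (hx : |1 - x| < 1) :
    HasDerivAt (Pk k)
      (eulerianSeries k (1 - x) - x * deriv (eulerianSeries k) (1 - x)) x := by
  have hseries := (hasDerivAt_eulerianSeries k hx).differentiableAt.hasDerivAt.comp x
    ((hasDerivAt_id' x).const_sub 1)
  exact ((hasDerivAt_id' x).mul hseries).congr_deriv (by simp only [Function.comp_apply]; ring)

theorem Pk_zero {x : ℝ} (hx : |1 - x| < 1) : Pk 0 x = 1 := by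
  have hx0 : x ≠ 0 := by rintro rfl; simp at hx
  simp only [Pk, pow_zero, one_mul, tsum_geometric_of_abs_lt_one hx, sub_sub_cancel]
  exact mul_inv_cancel₀ hx0

theorem stmt1 (k : ℕ) (x : ℝ) (hx0 : 0 < x) (hx2 : x < 2) :
    Pk 0 x = 1 ∧
    Pk (k + 1) x = (1 / x) * Pk k x + (x - 1) * deriv (Pk k) x := by
  have hx : |1 - x| < 1 := by rw [abs_lt]; constructor <;> linarith
  refine ⟨Pk_zero hx, ?_⟩
  have Pk_eq (m : ℕ) : Pk m x = x * eulerianSeries m (1 - x) := rfl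
  rw [(hasDerivAt_Pk k hx).deriv, Pk_eq, Pk_eq, eulerianSeries_succ k hx]
  field_simp
  ring
end

section
/- Let λ_1, …, λ_N be distinct nonzero reals, a_1, …, a_N positive reals, and μ_n = Σ_{j=1}^N λ_j^n a_j. Let M_0 and M_1 be the N×N Hankel matrices with (M_0)_{ij} = μ_{i+j} and (M_1)_{ij} = μ_{i+j+1} for 0 ≤ i,j ≤ N-1. Then M_0 is invertible, and the characteristic polynomial of M_1 M_0^{-1} equals ∏_{j=1}^N (x - λ_j). -/
open Polynomial Matrix

lemma aux_charpoly_conj {n : Type*} [Fintype n] [DecidableEq n]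
    (V D : Matrix n n ℝ) (hV : IsUnit V.det) :
    (V * D * V⁻¹).charpoly = D.charpoly := by
  have hVV : V * V⁻¹ = 1 := Matrix.mul_nonsing_inv V hV
  have key : Matrix.charmatrix (V * D * V⁻¹)
      = V.map C * Matrix.charmatrix D * (V⁻¹).map C := by
    rw [Matrix.charmatrix]
    rw [Matrix.charmatrix]
    rw [Matrix.mul_sub, Matrix.sub_mul]
    congr 1
    · -- V.map C * scalar X * V⁻¹.map C = scalar X
      have hcomm : V.map C * (Matrix.scalar n) X = (Matrix.scalar n) X * V.map C := by
        ext i j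
        rw [Matrix.scalar_apply, Matrix.mul_diagonal, Matrix.diagonal_mul, mul_comm]
      rw [hcomm, Matrix.mul_assoc, ← Matrix.map_mul, hVV,
        Matrix.map_one _ (map_zero C) (map_one C), Matrix.mul_one]
    · simp [Matrix.map_mul]
  have hdet : (V.map C).det * ((V⁻¹).map C).det = 1 := by
    rw [← Matrix.det_mul, ← Matrix.map_mul, hVV, Matrix.map_one _ (map_zero C) (map_one C),
      Matrix.det_one]
  rw [Matrix.charpoly, Matrix.charpoly, key, Matrix.det_mul, Matrix.det_mul]
  calc (V.map C).det * (Matrix.charmatrix D).det * ((V⁻¹).map C).det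
      = (V.map C).det * ((V⁻¹).map C).det * (Matrix.charmatrix D).det := by ring
    _ = (Matrix.charmatrix D).det := by rw [hdet, one_mul]

theorem stmt14 (N : ℕ) (hN : 0 < N) (lam a : Fin N → ℝ)
    (hinj : Function.Injective lam) (hlam : ∀ j, lam j ≠ 0) (ha : ∀ j, 0 < a j)
    (μ : ℕ → ℝ) (hμ : ∀ n, μ n = ∑ j, lam j ^ n * a j)
    (M0 M1 : Matrix (Fin N) (Fin N) ℝ)
    (hM0 : ∀ i j : Fin N, M0 i j = μ ((i : ℕ) + (j : ℕ)))
    (hM1 : ∀ i j : Fin N, M1 i j = μ ((i : ℕ) + (j : ℕ) + 1)) :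
    IsUnit M0 ∧ (M1 * M0⁻¹).charpoly = ∏ j, (X - C (lam j)) := by
  classical
  set V : Matrix (Fin N) (Fin N) ℝ := Matrix.of fun i j => lam j ^ (i : ℕ) with hV
  have hVtrans : V = (Matrix.vandermonde lam)ᵀ := by
    ext i j; rfl
  have hVdet : V.det ≠ 0 := by
    rw [hVtrans, Matrix.det_transpose, Matrix.det_vandermonde]
    apply Finset.prod_ne_zero_iff.mpr
    intro i _
    apply Finset.prod_ne_zero_iff.mpr
    intro j hj
    exact sub_ne_zero_of_ne fun h => (Finset.mem_Ioi.mp hj).ne' (hinj h)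
  have hVunit : IsUnit V.det := isUnit_iff_ne_zero.mpr hVdet
  have hVtunit : IsUnit (Vᵀ).det := by rw [Matrix.det_transpose]; exact hVunit
  have hVapp : ∀ i j, V i j = lam j ^ (i : ℕ) := fun i j => rfl
  have hMD : ∀ i x (d : Fin N → ℝ), (V * Matrix.diagonal d) i x = V i x * d x :=
    fun i x d => Matrix.mul_diagonal d V i x
  have hM0eq : M0 = V * Matrix.diagonal a * Vᵀ := by
    ext i j
    rw [hM0, hμ, Matrix.mul_apply]
    simp_rw [hMD, Matrix.transpose_apply, hVapp]
    exact Finset.sum_congr rfl fun k _ => by rw [pow_add]; ring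
  have hM1eq : M1 = V * Matrix.diagonal (fun k => lam k * a k) * Vᵀ := by
    ext i j
    rw [hM1, hμ, Matrix.mul_apply]
    simp_rw [hMD, Matrix.transpose_apply, hVapp]
    exact Finset.sum_congr rfl fun k _ => by rw [pow_add, pow_add, pow_one]; ring
  have hadet : (Matrix.diagonal a).det ≠ 0 := by
    rw [Matrix.det_diagonal]
    exact Finset.prod_ne_zero_iff.mpr fun j _ => ne_of_gt (ha j)
  have hM0det : IsUnit M0.det := by
    rw [hM0eq, Matrix.det_mul, Matrix.det_mul, Matrix.det_transpose]
    exact isUnit_iff_ne_zero.mpr (mul_ne_zero (mul_ne_zero hVdet hadet) hVdet)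
  have hM0unit : IsUnit M0 := (Matrix.isUnit_iff_isUnit_det M0).mpr hM0det
  refine ⟨hM0unit, ?_⟩
  have hainv : (Matrix.diagonal a)⁻¹ = Matrix.diagonal (fun k => (a k)⁻¹) := by
    apply Matrix.inv_eq_right_inv
    rw [Matrix.diagonal_mul_diagonal]
    have : (fun k => a k * (a k)⁻¹) = fun _ : Fin N => (1 : ℝ) := by
      funext k; exact mul_inv_cancel₀ (ne_of_gt (ha k))
    rw [this, Matrix.diagonal_one]
  have hDinv : Matrix.diagonal (fun k => lam k * a k) * (Matrix.diagonal a)⁻¹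
      = Matrix.diagonal lam := by
    rw [hainv, Matrix.diagonal_mul_diagonal]
    have : (fun i => lam i * a i * (a i)⁻¹) = lam := by
      funext k; rw [mul_assoc, mul_inv_cancel₀ (ne_of_gt (ha k)), mul_one]
    rw [this]
  have hM0inv : M0⁻¹ = Vᵀ⁻¹ * (Matrix.diagonal a)⁻¹ * V⁻¹ := by
    rw [hM0eq, Matrix.mul_inv_rev, Matrix.mul_inv_rev, Matrix.mul_assoc]
  have hconj : M1 * M0⁻¹ = V * Matrix.diagonal lam * V⁻¹ := by
    rw [hM1eq, hM0inv]
    simp only [← Matrix.mul_assoc]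
    rw [Matrix.mul_nonsing_inv_cancel_right _ _ hVtunit]
    rw [Matrix.mul_assoc V, hDinv]
  rw [hconj, aux_charpoly_conj V (Matrix.diagonal lam) hVunit]
  rw [Matrix.charpoly_of_upperTriangular _ (Matrix.blockTriangular_diagonal lam)]
  simp
end
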